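/- arXiv:1707.02484 — 5 statements merged into one kernel-verified Lean document; each statement's English description precedes it below -/
import Mathlib

section
/- If X ≥ 0 has E[X²] < ∞, then F̄(x)·σ²(x) → 0 as x → ∞, where σ²(x) = Var(X - x | X > x) and F̄(x) = P(X > x) > 0 for all x. -/
/-!
On `{X > x}` the product `F̄(x) σ²(x)` is the unnormalised variance `∫ (X - x - e(x))²`, hence
nonnegative, and it is at most `∫ (X - x)² ≤ ∫ X²` over the same set once `x ≥ 0`. That tail
integral of the integrable `X²` vanishes as `x → ∞`, since the sets `{X > x}` decrease to `∅`.
-/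

open MeasureTheory Set Filter

theorem mul_div_sub_sq_le {m A c : ℝ} (hm : 0 ≤ m) (hA : 0 ≤ A) : m * (A / m - c ^ 2) ≤ A := by
  rcases hm.eq_or_lt with rfl | hm
  · simpa using hA
  rw [mul_sub, mul_div_cancel₀ _ hm.ne']
  nlinarith [mul_nonneg hm.le (sq_nonneg c)]

theorem integral_sub_mean_sq {α : Type*} [MeasurableSpace α] {ν : Measure α} [IsFiniteMeasure ν]
    {f : α → ℝ} (hf : MemLp f 2 ν) :
    ∫ a, (f a - (∫ b, f b ∂ν) / ν.real univ) ^ 2 ∂ν =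
      ν.real univ * ((∫ a, f a ^ 2 ∂ν) / ν.real univ - ((∫ a, f a ∂ν) / ν.real univ) ^ 2) := by
  set m := ν.real univ
  set c := (∫ a, f a ∂ν) / m
  rcases eq_or_ne m 0 with hm | hm
  · have hν : ν = 0 := Measure.measure_univ_eq_zero.1 ((measureReal_eq_zero_iff).1 hm)
    simp [hν, hm]
  have hf1 : Integrable f ν := hf.integrable one_le_two
  have hf2 : Integrable (fun a => f a ^ 2) ν := hf.integrable_sq
  have hf21 : Integrable (fun a => f a ^ 2 - 2 * c * f a) ν := hf2.sub (hf1.const_mul _)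
  have hexpand : ∫ a, (f a - c) ^ 2 ∂ν = ∫ a, f a ^ 2 ∂ν - 2 * c * ∫ a, f a ∂ν + c ^ 2 * m := by
    calc ∫ a, (f a - c) ^ 2 ∂ν = ∫ a, (f a ^ 2 - 2 * c * f a) + c ^ 2 ∂ν := by
          congr 1; ext a; ring
      _ = _ := by
          rw [integral_add hf21 (integrable_const _),
            integral_sub hf2 (hf1.const_mul _), integral_const_mul, integral_const, smul_eq_mul,
            mul_comm (ν.real univ)]
  have hcm : c * m = ∫ a, f a ∂ν := div_mul_cancel₀ _ hm
  rw [hexpand, mul_sub, mul_div_cancel₀ _ hm]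
  linear_combination (2 * c) * hcm

theorem tendsto_setIntegral_lt_atTop_zero {Ω E : Type*} [MeasurableSpace Ω]
    [NormedAddCommGroup E] [NormedSpace ℝ E] {μ : Measure Ω} {X : Ω → ℝ} (hXm : Measurable X)
    {g : Ω → E} (hg : Integrable g μ) :
    Tendsto (fun x => ∫ ω in {ω | x < X ω}, g ω ∂μ) atTop (nhds 0) := by
  have h := tendsto_setIntegral_of_antitone (μ := μ) (f := g)
    (fun x : ℝ => measurableSet_lt measurable_const hXm)
    (fun x y hxy ω (hω : y < X ω) => (hxy.trans_lt hω : x < X ω)) ⟨0, hg.integrableOn⟩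
  have hempty : (⋂ x : ℝ, {ω | x < X ω}) = ∅ :=
    eq_empty_of_forall_notMem fun ω hω => lt_irrefl (X ω) (mem_iInter.1 hω (X ω))
  rwa [hempty, setIntegral_empty] at h

theorem setIntegral_sub_sq_le_setIntegral_sq {Ω : Type*} [MeasurableSpace Ω] {μ : Measure Ω}
    [IsFiniteMeasure μ] {X : Ω → ℝ} (hXm : Measurable X) (hX : MemLp X 2 μ) {x : ℝ} (hx : 0 ≤ x) :
    ∫ ω in {ω | x < X ω}, (X ω - x) ^ 2 ∂μ ≤ ∫ ω in {ω | x < X ω}, X ω ^ 2 ∂μ :=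
  setIntegral_mono_on (hX.sub (memLp_const x)).integrable_sq.integrableOn
    hX.integrable_sq.integrableOn
    (measurableSet_lt measurable_const hXm) fun ω (hω : x < X ω) => by nlinarith

theorem stmt7_general {Ω : Type*} [MeasurableSpace Ω] (μ : Measure Ω) [IsProbabilityMeasure μ]
    (X : Ω → ℝ) (hXm : Measurable X)
    (hX2 : Integrable (fun ω => (X ω) ^ 2) μ)
    (Fbar : ℝ → ℝ) (hFbar : ∀ x, Fbar x = (μ {ω | x < X ω}).toReal)
    (e σ2 : ℝ → ℝ)
    (he : ∀ x, e x = (∫ ω in {ω | x < X ω}, (X ω - x) ∂μ) / Fbar x)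
    (hσ2 : ∀ x, σ2 x =
      (∫ ω in {ω | x < X ω}, (X ω - x) ^ 2 ∂μ) / Fbar x - (e x) ^ 2) :
    Tendsto (fun x => Fbar x * σ2 x) atTop (nhds 0) := by
  have hX : MemLp X 2 μ := (memLp_two_iff_integrable_sq hXm.aestronglyMeasurable).2 hX2
  have hF : ∀ x, Fbar x = (μ.restrict {ω | x < X ω}).real univ := fun x => by
    rw [hFbar, measureReal_restrict_apply_univ, measureReal_def]
  refine tendsto_of_tendsto_of_tendsto_of_le_of_le' tendsto_const_nhds
    (tendsto_setIntegral_lt_atTop_zero hXm hX2) (Eventually.of_forall fun x => ?_) ?_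
  · have hXx : MemLp (fun ω => X ω - x) 2 (μ.restrict {ω | x < X ω}) :=
      (hX.restrict _).sub (memLp_const x)
    rw [hσ2, he, hF, ← integral_sub_mean_sq hXx]
    exact integral_nonneg fun _ => sq_nonneg _
  · filter_upwards [eventually_ge_atTop 0] with x hx
    rw [hσ2, hF]
    exact (mul_div_sub_sq_le measureReal_nonneg (integral_nonneg fun _ => sq_nonneg _)).trans
      (setIntegral_sub_sq_le_setIntegral_sq hXm hX hx)

/-- If `E[X²] < ∞` then `F̄(x) σ²(x) → 0` as `x → ∞`, where `σ²(x)` is the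
residual variance `Var(X - x | X > x)`. -/
theorem stmt7 {Ω : Type*} [MeasurableSpace Ω] (μ : Measure Ω) [IsProbabilityMeasure μ]
    (X : Ω → ℝ) (hXm : Measurable X) (hX0 : ∀ ω, 0 ≤ X ω)
    (hX2 : Integrable (fun ω => (X ω) ^ 2) μ)
    (Fbar : ℝ → ℝ) (hFbar : ∀ x, Fbar x = (μ {ω | x < X ω}).toReal)
    (hpos : ∀ x, 0 < Fbar x)
    (e σ2 : ℝ → ℝ)
    (he : ∀ x, e x = (∫ ω in {ω | x < X ω}, (X ω - x) ∂μ) / Fbar x)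
    (hσ2 : ∀ x, σ2 x =
      (∫ ω in {ω | x < X ω}, (X ω - x) ^ 2 ∂μ) / Fbar x - (e x) ^ 2) :
    Tendsto (fun x => Fbar x * σ2 x) atTop (nhds 0) :=
  stmt7_general μ X hXm hX2 Fbar hFbar e σ2 he hσ2
end

section
/- If the density f satisfies f^{(s)}(0) = 0 for all s < r-1 and f^{(r-1)}(0) = d (with f^{(r-1)} continuous at 0), then e(x) = μ - x + (μ d / r!) x^r + o(x^r) as x → 0+. -/
/-!
Write `G x = ∫₀ˣ f`. On `[0, ∞)` the survival function is `F̄ = 1 - G` and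
`∫ₓ^∞ F̄ = μ - x + ∫₀ˣ G`. Taylor's theorem at `0` gives `f t = d tʳ⁻¹/(r-1)! + o(tʳ⁻¹)`;
integrating, `G x = d xʳ/r! + o(xʳ)` and `∫₀ˣ G = o(xʳ)`. Expanding
`e x = (μ - x + o(xʳ)) / (1 - G x)` to first order in `G` gives the claim, because
`x G x` and `xʳ G x` are `o(xʳ)`.
-/

open MeasureTheory Set Asymptotics Filter Topology Nat

theorem taylor_isLittleO_of_iteratedDeriv_eq_zero {E : Type*} [NormedAddCommGroup E]
    [NormedSpace ℝ E] {f : ℝ → E} {n : ℕ} {x₀ : ℝ} (hf : ContDiff ℝ n f)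
    (hzero : ∀ k < n, iteratedDeriv k f x₀ = 0) :
    (fun x ↦ f x - ((n ! : ℝ)⁻¹ * (x - x₀) ^ n) • iteratedDeriv n f x₀)
      =o[𝓝 x₀] fun x ↦ (x - x₀) ^ n := by
  convert taylor_isLittleO_univ (x₀ := x₀) hf using 3 with x
  rw [taylor_within_apply, Finset.sum_range_succ, Finset.sum_eq_zero, zero_add,
    iteratedDerivWithin_univ]
  intro k hk
  rw [iteratedDerivWithin_univ, hzero k (Finset.mem_range.1 hk), smul_zero]

theorem isLittleO_intervalIntegral_pow_succ {E : Type*} [NormedAddCommGroup E] [NormedSpace ℝ E]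
    [CompleteSpace E] {g : ℝ → E} {n : ℕ} {x₀ : ℝ} (hg : Continuous g)
    (ho : g =o[𝓝 x₀] fun x ↦ (x - x₀) ^ n) :
    (fun x ↦ ∫ t in x₀..x, g t) =o[𝓝 x₀] fun x ↦ (x - x₀) ^ (n + 1) := by
  simpa using convex_univ.isLittleO_pow_succ_real (f := fun x ↦ ∫ t in x₀..x, g t) (mem_univ x₀)
    (fun x _ ↦ (hg.integral_hasStrictDerivAt x₀ x).hasDerivAt.hasDerivWithinAt)
    (by simpa using ho)

theorem isLittleO_intervalIntegral_sub_monomial {f : ℝ → ℝ} {n : ℕ} {c : ℝ} (hf : Continuous f)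
    (ho : (fun x ↦ f x - c * x ^ n) =o[𝓝 0] fun x ↦ x ^ n) :
    (fun x ↦ (∫ t in 0..x, f t) - c / (n + 1) * x ^ (n + 1)) =o[𝓝 0] fun x ↦ x ^ (n + 1) := by
  have hmono : Continuous fun x : ℝ ↦ c * x ^ n := by fun_prop
  have := isLittleO_intervalIntegral_pow_succ (g := fun x ↦ f x - c * x ^ n) (x₀ := 0)
    (hf.sub hmono) (by simpa using ho)
  refine (this.congr_left fun x ↦ ?_).congr_right fun x ↦ by simp
  rw [intervalIntegral.integral_sub (hf.intervalIntegrable _ _) (hmono.intervalIntegrable _ _),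
    intervalIntegral.integral_const_mul, integral_pow]
  ring

theorem Asymptotics.IsLittleO.isBigO_of_sub_const_mul {α : Type*} {G u : α → ℝ} {c : ℝ}
    {l : Filter α} (hG : (fun x ↦ G x - c * u x) =o[l] u) : G =O[l] u := by
  simpa using hG.isBigO.add ((isBigO_refl u l).const_mul_left c)

theorem isLittleO_residualLife_quotient {G Ψ : ℝ → ℝ} {r : ℕ} {m c : ℝ} (hr : r ≠ 0)
    (hG : (fun x ↦ G x - c * x ^ r) =o[𝓝 0] fun x ↦ x ^ r)
    (hΨ : Ψ =o[𝓝 0] fun x ↦ x ^ r) :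
    (fun x ↦ (m - x + Ψ x) / (1 - G x) - (m - x + m * c * x ^ r)) =o[𝓝 0] fun x ↦ x ^ r := by
  have hpow : (fun x : ℝ ↦ x ^ r) =o[𝓝 0] fun _ ↦ (1 : ℝ) := by
    simpa using isLittleO_pow_pow (𝕜 := ℝ) (Nat.pos_of_ne_zero hr)
  have hGO : G =O[𝓝 0] fun x ↦ x ^ r := hG.isBigO_of_sub_const_mul
  have hG0 : Tendsto G (𝓝 0) (𝓝 0) := (isLittleO_one_iff ℝ).1 (hGO.trans_isLittleO hpow)
  have hden : Tendsto (fun x ↦ 1 - G x) (𝓝 0) (𝓝 1) := by simpa using hG0.const_sub 1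
  have hnum : (fun x ↦ Ψ x + m * (G x - c * x ^ r) - x * G x + m * c * (x ^ r * G x))
      =o[𝓝 0] fun x ↦ x ^ r := by
    have hx : (fun x : ℝ ↦ x) =o[𝓝 0] fun _ ↦ (1 : ℝ) := by
      simpa using isLittleO_pow_pow (𝕜 := ℝ) (m := 0) (n := 1) one_pos
    refine ((hΨ.add (hG.const_mul_left m)).sub ?_).add (IsLittleO.const_mul_left ?_ _)
    · simpa using hx.mul_isBigO hGO
    · simpa using hpow.mul_isBigO hGO
  have hinv : (fun x ↦ (1 - G x)⁻¹) =O[𝓝 0] fun _ ↦ (1 : ℝ) :=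
    (hden.inv₀ one_ne_zero).isBigO_one ℝ
  refine (hnum.mul_isBigO hinv).congr' ?_ (by simp)
  filter_upwards [hden.eventually_ne one_ne_zero] with x hx
  field_simp
  ring

theorem survival_eq_one_sub_integral {f Fbar : ℝ → ℝ} (hfint : IntegrableOn f (Ioi 0))
    (hFbar : ∀ x, 0 ≤ x → Fbar x = ∫ t in Ioi x, f t) (hF0 : Fbar 0 = 1) {x : ℝ} (hx : 0 ≤ x) :
    Fbar x = 1 - ∫ t in 0..x, f t := by
  rw [← intervalIntegral.integral_Ioi_sub_Ioi hfint hx, ← hFbar 0 le_rfl, hF0, hFbar x hx]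
  ring

theorem integral_Ioi_survival_eq {f Fbar : ℝ → ℝ} (hf : Continuous f)
    (hfint : IntegrableOn f (Ioi 0)) (hFbar : ∀ x, 0 ≤ x → Fbar x = ∫ t in Ioi x, f t)
    (hF0 : Fbar 0 = 1) (hFint : IntegrableOn Fbar (Ioi 0)) {x : ℝ} (hx : 0 ≤ x) :
    ∫ t in Ioi x, Fbar t = (∫ t in Ioi 0, Fbar t) - x + ∫ t in 0..x, ∫ s in 0..t, f s := by
  have hG : Continuous fun t ↦ ∫ s in 0..t, f s :=
    intervalIntegral.continuous_primitive (fun a b ↦ hf.intervalIntegrable a b) 0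
  have hFbar_eq : ∫ t in 0..x, Fbar t = ∫ t in 0..x, (1 - ∫ s in 0..t, f s) := by
    refine intervalIntegral.integral_congr fun t ht ↦ ?_
    rw [uIcc_of_le hx] at ht
    exact survival_eq_one_sub_integral hfint hFbar hF0 ht.1
  rw [← intervalIntegral.integral_Ioi_sub_Ioi hFint hx, intervalIntegral.integral_sub
    intervalIntegrable_const (hG.intervalIntegrable _ _)] at hFbar_eq
  simp only [intervalIntegral.integral_const, sub_zero, smul_eq_mul, mul_one] at hFbar_eq
  linarith

theorem stmt10_general (r : ℕ) (hr : 1 ≤ r) (d : ℝ)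
    (f : ℝ → ℝ) (hfd : ContDiff ℝ r f)
    (hzero : ∀ s : ℕ, s < r - 1 → iteratedDeriv s f 0 = 0)
    (hd : iteratedDeriv (r - 1) f 0 = d)
    (hfint : IntegrableOn f (Ioi 0))
    (Fbar : ℝ → ℝ) (hFbar : ∀ x, 0 ≤ x → Fbar x = ∫ t in Ioi x, f t)
    (hF0 : Fbar 0 = 1)
    (hFint : IntegrableOn Fbar (Ioi 0))
    (e : ℝ → ℝ) (he : ∀ x, e x = (∫ t in Ioi x, Fbar t) / Fbar x)
    (m : ℝ) (hm : m = e 0) :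
    (fun x => e x - (m - x + m * d / (Nat.factorial r) * x ^ r))
      =o[nhdsWithin 0 (Ioi 0)] fun x => x ^ r := by
  obtain ⟨n, rfl⟩ := Nat.exists_eq_add_of_le' hr
  simp only [Nat.add_sub_cancel] at hzero hd
  have hf : Continuous f := hfd.continuous
  have hf_taylor : (fun x ↦ f x - d / n ! * x ^ n) =o[𝓝 0] fun x ↦ x ^ n := by
    simpa [hd, div_eq_inv_mul, mul_right_comm _ _ d] using
      taylor_isLittleO_of_iteratedDeriv_eq_zero (hfd.of_le (by norm_cast; omega)) hzero
  have hG := isLittleO_intervalIntegral_sub_monomial hf hf_taylor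
  have hΨ := isLittleO_intervalIntegral_pow_succ (x₀ := 0)
    (intervalIntegral.continuous_primitive (fun a b ↦ hf.intervalIntegrable a b) 0)
    (by simpa using hG.isBigO_of_sub_const_mul.trans_isLittleO (isLittleO_pow_pow n.lt_succ_self))
  have hmain := isLittleO_residualLife_quotient (m := m) n.succ_ne_zero hG (by simpa using hΨ)
  have hm' : m = ∫ t in Ioi 0, Fbar t := by rw [hm, he, hF0, div_one]
  refine (hmain.mono nhdsWithin_le_nhds).congr' ?_ EventuallyEq.rfl
  filter_upwards [self_mem_nhdsWithin] with x hx
  rw [he x, integral_Ioi_survival_eq hf hfint hFbar hF0 hFint (le_of_lt hx), ← hm',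
    survival_eq_one_sub_integral hfint hFbar hF0 (le_of_lt hx), Nat.factorial_succ]
  push_cast
  field_simp

/-- If `f⁽ˢ⁾(0) = 0` for `s < r-1` and `f⁽ʳ⁻¹⁾(0) = d` with `f⁽ʳ⁻¹⁾` continuous at `0`,
then `e(x) = μ - x + (μ d / r!) xʳ + o(xʳ)` as `x → 0+`. -/
theorem stmt10 (r : ℕ) (hr : 1 ≤ r) (d : ℝ)
    (f : ℝ → ℝ) (hfd : ContDiff ℝ r f)
    (hzero : ∀ s : ℕ, s < r - 1 → iteratedDeriv s f 0 = 0)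
    (hd : iteratedDeriv (r - 1) f 0 = d)
    (hcont : ContinuousAt (iteratedDeriv (r - 1) f) 0)
    (hfnn : ∀ x, 0 ≤ x → 0 ≤ f x)
    (hfint : IntegrableOn f (Ioi 0))
    (Fbar : ℝ → ℝ) (hFbar : ∀ x, 0 ≤ x → Fbar x = ∫ t in Ioi x, f t)
    (hF0 : Fbar 0 = 1)
    (hFint : IntegrableOn Fbar (Ioi 0))
    (e : ℝ → ℝ) (he : ∀ x, e x = (∫ t in Ioi x, Fbar t) / Fbar x)
    (m : ℝ) (hm : m = e 0) :
    (fun x => e x - (m - x + m * d / (Nat.factorial r) * x ^ r))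
      =o[nhdsWithin 0 (Ioi 0)] fun x => x ^ r :=
  stmt10_general r hr d f hfd hzero hd hfint Fbar hFbar hF0 hFint e he m hm
end

section
/- Let η(x) = F̄(x)/f(x) be the reciprocal hazard. If E[X^r] < ∞ for some r > 2 and η'(x) → c as x → ∞, then lim_{x→∞} η(x)/e(x) = 1 - c, where e is the mean residual life function. -/
open MeasureTheory Set Filter Asymptotics Topology

/-! Since `F̄' = -f` and `F̄ = η f`, the product `η F̄` has derivative `(η' - 1) F̄`. The moment
bound gives `F̄(x) = O(x⁻ʳ)`, while `η(x) = O(x)` because `η'` is eventually bounded; since `r > 2`,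
`η F̄ → 0` and `F̄` is integrable at infinity, so `η(x) F̄(x) = ∫ₓ^∞ (1 - η') F̄`. Dividing by
`e(x) = ∫ₓ^∞ F̄ / F̄(x)` exhibits `η / e` as an `F̄`-weighted average of `1 - η'` over `(x, ∞)`,
which tends to `1 - c`. -/

theorem MeasureTheory.IntegrableAtFilter.eventually_integrableOn_Ioi {g : ℝ → ℝ}
    (hg : IntegrableAtFilter g atTop) : ∀ᶠ x in atTop, IntegrableOn g (Ioi x) := by
  obtain ⟨s, hs, hint⟩ := hg
  obtain ⟨a, ha⟩ := mem_atTop_sets.1 hs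
  filter_upwards [eventually_ge_atTop a] with x hx
  exact hint.mono_set fun t ht => ha t (hx.trans (le_of_lt ht))

theorem integral_Ioi_pos {g : ℝ → ℝ} {x : ℝ} (hg : ∀ t, x < t → 0 < g t)
    (hint : IntegrableOn g (Ioi x)) : 0 < ∫ t in Ioi x, g t := by
  rw [setIntegral_pos_iff_support_of_nonneg_ae
    ((ae_restrict_iff' measurableSet_Ioi).2 (ae_of_all _ fun t ht => (hg t ht).le)) hint]
  have hsupp : Function.support g ∩ Ioi x = Ioi x :=
    inter_eq_right.2 fun t ht => (hg t ht).ne'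
  simp [hsupp]

theorem hasDerivAt_integral_Ioi {g : ℝ → ℝ} {a x : ℝ} (hint : IntegrableOn g (Ioi a))
    (hg : Continuous g) (hx : a < x) : HasDerivAt (fun y => ∫ t in Ioi y, g t) (-g x) x := by
  have hderiv := (hasDerivAt_const x (∫ t in Ioi a, g t)).sub
    (intervalIntegral.integral_hasDerivAt_right (hg.intervalIntegrable a x)
      (hg.stronglyMeasurableAtFilter _ _) hg.continuousAt)
  rw [zero_sub] at hderiv
  refine hderiv.congr_of_eventuallyEq ?_
  filter_upwards [eventually_gt_nhds hx] with y hy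
  rw [Pi.sub_apply, ← intervalIntegral.integral_Ioi_sub_Ioi hint hy.le, sub_sub_cancel]

theorem rpow_mul_integral_Ioi_le {g : ℝ → ℝ} {r x : ℝ} (hg : ∀ t, 0 < t → 0 ≤ g t)
    (hint : IntegrableOn g (Ioi x)) (hmom : IntegrableOn (fun t => t ^ r * g t) (Ioi 0))
    (hr : 0 ≤ r) (hx : 0 ≤ x) :
    x ^ r * ∫ t in Ioi x, g t ≤ ∫ t in Ioi 0, t ^ r * g t := by
  have hmom_nonneg : ∀ t ∈ Ioi (0 : ℝ), 0 ≤ t ^ r * g t := fun t ht =>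
    mul_nonneg (Real.rpow_nonneg (le_of_lt ht) r) (hg t ht)
  calc x ^ r * ∫ t in Ioi x, g t = ∫ t in Ioi x, x ^ r * g t := (integral_const_mul _ _).symm
    _ ≤ ∫ t in Ioi x, t ^ r * g t := by
      refine setIntegral_mono_on (hint.const_mul _) (hmom.mono_set (Ioi_subset_Ioi hx))
        measurableSet_Ioi fun t ht => ?_
      exact mul_le_mul_of_nonneg_right (Real.rpow_le_rpow hx (le_of_lt ht) hr)
        (hg t (hx.trans_lt ht))
    _ ≤ ∫ t in Ioi 0, t ^ r * g t :=
      setIntegral_mono_set hmom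
        ((ae_restrict_iff' measurableSet_Ioi).2 (ae_of_all _ hmom_nonneg))
        (ae_of_all _ (Ioi_subset_Ioi hx))

theorem integral_Ioi_isBigO_rpow_neg {g : ℝ → ℝ} {r : ℝ} (hg : ∀ t, 0 < t → 0 ≤ g t)
    (hint : IntegrableOn g (Ioi 0)) (hmom : IntegrableOn (fun t => t ^ r * g t) (Ioi 0))
    (hr : 0 ≤ r) : (fun x => ∫ t in Ioi x, g t) =O[atTop] (fun x => x ^ (-r)) := by
  refine IsBigO.of_bound (∫ t in Ioi 0, t ^ r * g t) ?_
  filter_upwards [eventually_gt_atTop 0] with x hx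
  have hint_x : IntegrableOn g (Ioi x) := hint.mono_set (Ioi_subset_Ioi hx.le)
  have htail_nonneg : 0 ≤ ∫ t in Ioi x, g t :=
    setIntegral_nonneg measurableSet_Ioi fun t ht => hg t (hx.trans ht)
  rw [Real.norm_of_nonneg htail_nonneg, Real.norm_of_nonneg (Real.rpow_nonneg hx.le _),
    Real.rpow_neg hx.le, ← div_eq_mul_inv, le_div_iff₀ (Real.rpow_pos_of_pos hx r), mul_comm]
  exact rpow_mul_integral_Ioi_le hg hint_x hmom hr hx.le

theorem isBigO_id_atTop_of_hasDerivAt {g g' : ℝ → ℝ} (hg : ∀ x, HasDerivAt g (g' x) x)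
    (hg' : g' =O[atTop] (fun _ => (1 : ℝ))) : g =O[atTop] id := by
  obtain ⟨C, hC⟩ := hg'.bound
  obtain ⟨a, ha⟩ := eventually_atTop.1 hC
  have hlip : (fun x => g x - g a) =O[atTop] (fun x => x - a) := by
    refine IsBigO.of_bound C ?_
    filter_upwards [eventually_ge_atTop a] with x hx
    refine Convex.norm_image_sub_le_of_norm_hasDerivWithin_le (s := Ici a)
      (fun y _ => (hg y).hasDerivWithinAt) (fun y hy => ?_) (convex_Ici a) self_mem_Ici hx
    simpa using ha y hy
  have hshift : (fun x : ℝ => x - a) =O[atTop] id :=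
    (isBigO_refl id atTop).sub (isLittleO_const_id_atTop a).isBigO
  simpa using (hlip.trans hshift).add (isLittleO_const_id_atTop (g a)).isBigO

theorem tendsto_id_mul_rpow_neg_atTop {r : ℝ} (hr : 1 < r) :
    Tendsto (fun x : ℝ => id x * x ^ (-r)) atTop (𝓝 0) := by
  refine (tendsto_rpow_neg_atTop (sub_pos.2 hr)).congr' ?_
  filter_upwards [eventually_gt_atTop 0] with x hx
  rw [neg_sub, sub_eq_neg_add, Real.rpow_add_one hx.ne', id, mul_comm]

theorem tendsto_integral_Ioi_mul_div_integral_Ioi {k w : ℝ → ℝ} {L : ℝ}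
    (hk : Tendsto k atTop (𝓝 L)) (hw : IntegrableAtFilter w atTop)
    (hkw : IntegrableAtFilter (fun t => k t * w t) atTop) (hwpos : ∀ᶠ t in atTop, 0 < w t) :
    Tendsto (fun x => (∫ t in Ioi x, k t * w t) / ∫ t in Ioi x, w t) atTop (𝓝 L) := by
  refine Metric.tendsto_nhds.2 fun ε hε => ?_
  obtain ⟨a, ha⟩ := eventually_atTop.1 ((Metric.tendsto_nhds.1 hk (ε / 2) (half_pos hε)).and hwpos)
  filter_upwards [eventually_ge_atTop a, hw.eventually_integrableOn_Ioi,
    hkw.eventually_integrableOn_Ioi] with x hxa hwx hkwx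
  have hmass : 0 < ∫ t in Ioi x, w t :=
    integral_Ioi_pos (fun t ht => (ha t (hxa.trans ht.le)).2) hwx
  have hcentre : (∫ t in Ioi x, k t * w t) - (∫ t in Ioi x, w t) * L
      = ∫ t in Ioi x, (k t - L) * w t := by
    rw [← integral_mul_const, ← integral_sub hkwx (hwx.mul_const L)]
    exact integral_congr_ae (ae_of_all _ fun t => by ring)
  have hdev : ‖∫ t in Ioi x, (k t - L) * w t‖ ≤ ∫ t in Ioi x, ε / 2 * w t := by
    refine norm_integral_le_of_norm_le (hwx.const_mul _)
      ((ae_restrict_iff' measurableSet_Ioi).2 (ae_of_all _ fun t ht => ?_))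
    obtain ⟨hkt, hwt⟩ := ha t (hxa.trans ht.le)
    rw [norm_mul, Real.norm_of_nonneg hwt.le, ← dist_eq_norm]
    exact mul_le_mul_of_nonneg_right hkt.le hwt.le
  rw [integral_const_mul] at hdev
  rw [dist_eq_norm, div_sub' hmass.ne', hcentre, norm_div, Real.norm_of_nonneg hmass.le,
    div_lt_iff₀ hmass]
  linarith [mul_pos hε hmass]

theorem integral_Ioi_one_sub_deriv_mul_eq_mul {η η' F f : ℝ → ℝ} {x : ℝ}
    (hη : ∀ y, x ≤ y → HasDerivAt η (η' y) y) (hF : ∀ y, x ≤ y → HasDerivAt F (-f y) y)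
    (hFeq : ∀ y, x ≤ y → F y = η y * f y) (hlim : Tendsto (fun y => η y * F y) atTop (𝓝 0))
    (hint : IntegrableOn (fun t => (1 - η' t) * F t) (Ioi x)) :
    ∫ t in Ioi x, (1 - η' t) * F t = η x * F x := by
  have hderiv : ∀ y ∈ Ici x, HasDerivAt (fun y => -(η y * F y)) ((1 - η' y) * F y) y :=
    fun y hy => ((hη y hy).mul (hF y hy)).neg.congr_deriv (by rw [hFeq y hy]; ring)
  rw [integral_Ioi_of_hasDerivAt_of_tendsto' hderiv hint (by simpa using hlim.neg), zero_sub,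
    neg_neg]

theorem stmt11_general (f : ℝ → ℝ) (hfpos : ∀ x, 0 < f x) (hfc : Continuous f)
    (hfint : IntegrableOn f (Ioi 0))
    (Fbar : ℝ → ℝ) (hFbar : ∀ x, 0 ≤ x → Fbar x = ∫ t in Ioi x, f t)
    (r : ℝ) (hr : 2 < r)
    (hmom : IntegrableOn (fun t => t ^ r * f t) (Ioi 0))
    (η η' : ℝ → ℝ) (hη : ∀ x, η x = Fbar x / f x)
    (hηd : ∀ x, HasDerivAt η (η' x) x)
    (c : ℝ) (hc : Tendsto η' atTop (nhds c))
    (e : ℝ → ℝ) (he : ∀ x, e x = (∫ t in Ioi x, Fbar t) / Fbar x) :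
    Tendsto (fun x => η x / e x) atTop (nhds (1 - c)) := by
  have hFbar_eq : ∀ x, Fbar x = η x * f x := fun x => by
    rw [hη, div_mul_cancel₀ _ (hfpos x).ne']
  have hFc : Continuous Fbar := by
    rw [funext hFbar_eq]
    exact (continuous_iff_continuousAt.2 fun x => (hηd x).continuousAt).mul hfc
  have hFd : ∀ x, 0 < x → HasDerivAt Fbar (-f x) x := fun x hx =>
    (hasDerivAt_integral_Ioi hfint hfc hx).congr_of_eventuallyEq
      (by filter_upwards [eventually_gt_nhds hx] with y hy using hFbar y hy.le)
  have hFpos : ∀ᶠ x in atTop, 0 < Fbar x := by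
    filter_upwards [eventually_ge_atTop 0] with x hx
    rw [hFbar x hx]
    exact integral_Ioi_pos (fun t _ => hfpos t) (hfint.mono_set (Ioi_subset_Ioi hx))
  have hFO : Fbar =O[atTop] (fun x => x ^ (-r)) :=
    (integral_Ioi_isBigO_rpow_neg (fun t _ => (hfpos t).le) hfint hmom (by linarith)).congr'
      (by filter_upwards [eventually_ge_atTop 0] with x hx using (hFbar x hx).symm)
      EventuallyEq.rfl
  have hηF : Tendsto (fun x => η x * Fbar x) atTop (𝓝 0) :=
    ((isBigO_id_atTop_of_hasDerivAt hηd (hc.isBigO_one ℝ)).mul hFO).trans_tendsto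
      (tendsto_id_mul_rpow_neg_atTop (by linarith))
  have hdecay : IntegrableAtFilter (fun x : ℝ => x ^ (-r)) atTop :=
    integrableAtFilter_rpow_atTop_iff.2 (by linarith)
  have hkFm : Measurable fun t => (1 - η' t) * Fbar t :=
    (measurable_const.sub (funext (fun x => (hηd x).deriv) ▸ measurable_deriv η)).mul hFc.measurable
  have hkFO : (fun t => (1 - η' t) * Fbar t) =O[atTop] (fun x => x ^ (-r)) := by
    simpa using ((hc.const_sub 1).isBigO_one ℝ).mul hFO
  have hkFint : IntegrableAtFilter (fun t => (1 - η' t) * Fbar t) atTop :=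
    hkFO.integrableAtFilter hkFm.aestronglyMeasurable.stronglyMeasurableAtFilter hdecay
  have hratio : ∀ᶠ x in atTop,
      (∫ t in Ioi x, (1 - η' t) * Fbar t) / (∫ t in Ioi x, Fbar t) = η x / e x := by
    filter_upwards [eventually_gt_atTop 0, hkFint.eventually_integrableOn_Ioi] with x hx hint
    rw [he, div_div_eq_mul_div, integral_Ioi_one_sub_deriv_mul_eq_mul (fun y _ => hηd y)
      (fun y hy => hFd y (hx.trans_le hy)) (fun y _ => hFbar_eq y) hηF hint]
  exact (tendsto_integral_Ioi_mul_div_integral_Ioi (hc.const_sub 1)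
    (hFO.integrableAtFilter hFc.aestronglyMeasurable.stronglyMeasurableAtFilter hdecay)
    hkFint hFpos).congr' hratio

/-- If `E[Xʳ] < ∞` for some `r > 2` and `η'(x) → c` where `η = F̄/f`, then
`η(x)/e(x) → 1 - c` as `x → ∞`. -/
theorem stmt11 (f : ℝ → ℝ) (hfpos : ∀ x, 0 < f x) (hfc : Continuous f)
    (hfint : IntegrableOn f (Ioi 0))
    (Fbar : ℝ → ℝ) (hFbar : ∀ x, 0 ≤ x → Fbar x = ∫ t in Ioi x, f t)
    (hF0 : Fbar 0 = 1)
    (r : ℝ) (hr : 2 < r)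
    (hmom : IntegrableOn (fun t => t ^ r * f t) (Ioi 0))
    (η η' : ℝ → ℝ) (hη : ∀ x, η x = Fbar x / f x)
    (hηd : ∀ x, HasDerivAt η (η' x) x)
    (c : ℝ) (hc : Tendsto η' atTop (nhds c))
    (e : ℝ → ℝ) (he : ∀ x, e x = (∫ t in Ioi x, Fbar t) / Fbar x) :
    Tendsto (fun x => η x / e x) atTop (nhds (1 - c)) :=
  stmt11_general f hfpos hfc hfint Fbar hFbar r hr hmom η η' hη hηd c hc e he
end

section
/- Under the conditions E[X^r] < ∞ (r > 2) and η'(x) → c where η = F̄/f, the limiting constant satisfies 0 ≤ c ≤ 1/r. -/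
open MeasureTheory Set Filter

lemma aux_pos (f : ℝ → ℝ) (hfpos : ∀ x, 0 < f x)
    (hfint : IntegrableOn f (Ioi 0)) {x : ℝ} (hx : 0 ≤ x) :
    0 < ∫ t in Ioi x, f t := by
  have hint : IntegrableOn f (Ioi x) := hfint.mono_set (Ioi_subset_Ioi hx)
  rw [setIntegral_pos_iff_support_of_nonneg_ae
    (Filter.Eventually.of_forall fun t => (hfpos t).le) hint]
  have : Function.support f ∩ Ioi x = Ioi x := by
    rw [inter_eq_right]
    intro t _; exact (hfpos t).ne'
  rw [this]
  simp [Real.volume_Ioi]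

lemma aux_mono (η η' : ℝ → ℝ) (hηd : ∀ x, HasDerivAt η (η' x) x) (a b : ℝ)
    (hb : ∀ x, a ≤ x → b ≤ η' x) : ∀ x, a ≤ x → η a + b * (x - a) ≤ η x := by
  intro x hx
  set g : ℝ → ℝ := fun y => η y - b * y with hg
  have hgd : ∀ y, HasDerivAt g (η' y - b) y := fun y =>
    (hηd y).sub ((hasDerivAt_id y).const_mul b |>.congr_deriv (by ring))
  have hmono : MonotoneOn g (Ici a) := by
    apply monotoneOn_of_deriv_nonneg (convex_Ici a)
      (fun y _ => (hgd y).continuousAt.continuousWithinAt)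
      (fun y _ => (hgd y).differentiableAt.differentiableWithinAt)
    intro y hy
    rw [(hgd y).deriv]
    rw [interior_Ici] at hy
    linarith [hb y hy.le]
  have := hmono (self_mem_Ici) (mem_Ici.2 hx) hx
  simp only [hg] at this
  linarith

lemma aux_deriv (f : ℝ → ℝ) (hfc : Continuous f) (hfint : IntegrableOn f (Ioi 0))
    (Fbar : ℝ → ℝ) (hFbar : ∀ x, 0 ≤ x → Fbar x = ∫ t in Ioi x, f t)
    {x : ℝ} (hx : 0 < x) : HasDerivAt Fbar (-(f x)) x := by
  set I : ℝ := ∫ t in Ioi 0, f t with hI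
  have key : ∀ y ∈ Ioi (0:ℝ), Fbar y = I - ∫ t in (0:ℝ)..y, f t := by
    intro y hy
    have hy0 : (0:ℝ) ≤ y := le_of_lt hy
    have hsplit : (∫ t in Ioc 0 y, f t) + (∫ t in Ioi y, f t) = I := by
      rw [hI, ← setIntegral_union (Ioc_disjoint_Ioi le_rfl) measurableSet_Ioi
        (hfint.mono_set Ioc_subset_Ioi_self) (hfint.mono_set (Ioi_subset_Ioi hy0)),
        Ioc_union_Ioi_eq_Ioi hy0]
    rw [hFbar y hy0, intervalIntegral.integral_of_le hy0]
    linarith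
  have hd : HasDerivAt (fun y => I - ∫ t in (0:ℝ)..y, f t) (-(f x)) x :=
    (intervalIntegral.integral_hasDerivAt_right
      (hfc.intervalIntegrable 0 x)
      (hfc.stronglyMeasurableAtFilter _ _)
      hfc.continuousAt).const_sub I
  exact hd.congr_of_eventuallyEq <|
    Filter.eventuallyEq_of_mem (Ioi_mem_nhds hx) key

/-- If `E[Xʳ] < ∞` for some `r > 2` and `η'(x) → c` where `η = F̄/f`, then
`0 ≤ c ≤ 1/r`. -/
theorem stmt12 (f : ℝ → ℝ) (hfpos : ∀ x, 0 < f x) (hfc : Continuous f)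
    (hfint : IntegrableOn f (Ioi 0))
    (Fbar : ℝ → ℝ) (hFbar : ∀ x, 0 ≤ x → Fbar x = ∫ t in Ioi x, f t)
    (hF0 : Fbar 0 = 1)
    (r : ℝ) (hr : 2 < r)
    (hmom : IntegrableOn (fun t => t ^ r * f t) (Ioi 0))
    (η η' : ℝ → ℝ) (hη : ∀ x, η x = Fbar x / f x)
    (hηd : ∀ x, HasDerivAt η (η' x) x)
    (c : ℝ) (hc : Tendsto η' atTop (nhds c)) :
    0 ≤ c ∧ c ≤ 1 / r := by
  have hηpos : ∀ x, 0 ≤ x → 0 < η x := by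
    intro x hx
    rw [hη x, hFbar x hx]
    exact div_pos (aux_pos f hfpos hfint hx) (hfpos x)
  constructor
  · -- 0 ≤ c
    by_contra hneg
    push_neg at hneg
    have hev : ∀ᶠ x in atTop, η' x < c / 2 :=
      hc.eventually (eventually_lt_nhds (by linarith))
    obtain ⟨a, ha⟩ := eventually_atTop.1 (hev.and (eventually_ge_atTop (0:ℝ)))
    have ha0 : (0:ℝ) ≤ a := (ha a le_rfl).2
    have hub : ∀ x, a ≤ x → η x ≤ η a + (c / 2) * (x - a) := by
      intro x hx
      have hnegd : ∀ y, HasDerivAt (fun z => -η z) (-η' y) y := fun y => (hηd y).neg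
      have := aux_mono _ _ hnegd a (-(c / 2))
        (fun y hy => by linarith [(ha y hy).1]) x hx
      linarith
    have hea : 0 < η a := hηpos a ha0
    have hd0 : 0 ≤ 2 * η a / (-c) := div_nonneg (by linarith) (by linarith)
    have hkey : η a + (c / 2) * (2 * η a / (-c) + 1) = c / 2 := by
      field_simp [hneg.ne]
      ring
    have h1 : η (a + 2 * η a / (-c) + 1) ≤ η a + (c / 2) * (2 * η a / (-c) + 1) := by
      have h := hub (a + 2 * η a / (-c) + 1) (by linarith)
      have hxa : (a + 2 * η a / (-c) + 1) - a = 2 * η a / (-c) + 1 := by ring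
      rw [hxa] at h
      exact h
    have h2 : 0 < η (a + 2 * η a / (-c) + 1) := hηpos _ (by linarith)
    linarith
  · -- c ≤ 1/r
    by_contra hgt
    push_neg at hgt
    have hr0 : (0:ℝ) < r := by linarith
    have hrinv : (0:ℝ) < 1 / r := by positivity
    set b : ℝ := (1 / r + c) / 2 with hb
    have hb0 : 0 < b := by rw [hb]; linarith
    have hbc : b < c := by rw [hb]; linarith
    have hrb : 1 / r < b := by rw [hb]; linarith
    have hbr : 1 / b < r := by
      rw [div_lt_iff₀ hb0]
      rw [div_lt_iff₀ hr0] at hrb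
      linarith [mul_comm r b]
    have hev : ∀ᶠ x in atTop, b < η' x :=
      hc.eventually (eventually_gt_nhds hbc)
    obtain ⟨a, ha⟩ := eventually_atTop.1 (hev.and (eventually_ge_atTop (1:ℝ)))
    have ha1 : (1:ℝ) ≤ a := (ha a le_rfl).2
    have ha0 : (0:ℝ) < a := by linarith
    set e : ℝ := η a with he_def
    have he : 0 < e := hηpos a ha0.le
    set L : ℝ → ℝ := fun x => e + b * (x - a) with hL
    have hLη : ∀ x, a ≤ x → L x ≤ η x :=
      fun x hx => aux_mono η η' hηd a b (fun y hy => (ha y hy).1.le) x hx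
    have hLpos : ∀ x, a ≤ x → 0 < L x := by
      intro x hx
      have : 0 ≤ b * (x - a) := mul_nonneg hb0.le (by linarith)
      simp only [hL]; linarith
    have hFf : ∀ x, a ≤ x → f x * L x ≤ Fbar x := by
      intro x hx
      have h1 : L x ≤ Fbar x / f x := by rw [← hη x]; exact hLη x hx
      have := (le_div_iff₀ (hfpos x)).1 h1
      linarith [this]
    set φ : ℝ → ℝ := fun x => Fbar x * (e + b * (x - a)) ^ (1/b) with hφ
    have hLd : ∀ x : ℝ, HasDerivAt (fun y => e + b * (y - a)) b x := by
      intro x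
      have h1 : HasDerivAt (fun y : ℝ => y - a) 1 x := (hasDerivAt_id x).sub_const a
      have h2 := (h1.const_mul b).const_add e
      simpa using h2
    have hφd : ∀ x, a ≤ x → HasDerivAt φ
        (-(f x) * (L x) ^ (1/b) + Fbar x * (b * (1/b) * (L x) ^ (1/b - 1))) x := by
      intro x hx
      have hxpos : 0 < x := lt_of_lt_of_le ha0 hx
      have hFd : HasDerivAt Fbar (-(f x)) x := aux_deriv f hfc hfint Fbar hFbar hxpos
      have hrp : HasDerivAt (fun y => (e + b * (y - a)) ^ (1/b))
          (b * (1/b) * (L x) ^ (1/b - 1)) x :=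
        (hLd x).rpow_const (Or.inl (hLpos x hx).ne')
      exact hFd.mul hrp
    have hφmono : MonotoneOn φ (Ici a) := by
      apply monotoneOn_of_deriv_nonneg (convex_Ici a)
        (fun y hy => (hφd y hy).continuousAt.continuousWithinAt)
        (fun y hy => (hφd y (by rw [interior_Ici] at hy; exact hy.le)).differentiableAt.differentiableWithinAt)
      intro y hy
      rw [interior_Ici] at hy
      rw [(hφd y hy.le).deriv]
      have hLy := hLpos y hy.le
      have hb1 : b * (1/b) = 1 := mul_one_div_cancel hb0.ne'
      have hP : (L y) ^ (1/b) = (L y) ^ (1/b - 1) * L y := by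
        rw [← Real.rpow_add_one hLy.ne' (1/b - 1)]
        norm_num
      have hP2 : 0 ≤ (L y) ^ (1/b - 1) := Real.rpow_nonneg hLy.le _
      rw [hP, hb1]
      have := hFf y hy.le
      nlinarith [mul_nonneg hP2 (sub_nonneg.2 this)]
    have hFa : 0 < Fbar a := by rw [hFbar a ha0.le]; exact aux_pos f hfpos hfint ha0.le
    set K : ℝ := Fbar a * e ^ (1/b) with hK_def
    have hK : 0 < K := mul_pos hFa (Real.rpow_pos_of_pos he _)
    have hφa : φ a = K := by simp [hφ, hK_def]
    have hφge : ∀ x, a ≤ x → K ≤ φ x := by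
      intro x hx
      rw [← hφa]
      exact hφmono self_mem_Ici (mem_Ici.2 hx) hx
    set C : ℝ := ∫ t in Ioi a, t ^ r * f t with hC_def
    have hC0 : 0 ≤ C := by
      apply setIntegral_nonneg measurableSet_Ioi
      intro t ht
      exact mul_nonneg (Real.rpow_nonneg (by linarith [mem_Ioi.1 ht]) _) (hfpos t).le
    have htail : ∀ x, a ≤ x → x ^ r * Fbar x ≤ C := by
      intro x hx
      have hx0 : (0:ℝ) ≤ x := by linarith
      have hIoi0 : Ioi x ⊆ Ioi (0:ℝ) := Ioi_subset_Ioi hx0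
      have h1 : x ^ r * Fbar x = ∫ t in Ioi x, x ^ r * f t := by
        rw [hFbar x hx0, ← integral_const_mul]
      have h2 : (∫ t in Ioi x, x ^ r * f t) ≤ ∫ t in Ioi x, t ^ r * f t := by
        apply setIntegral_mono_on ((hfint.mono_set hIoi0).const_mul _)
          (hmom.mono_set hIoi0) measurableSet_Ioi
        intro t ht
        exact mul_le_mul_of_nonneg_right
          (Real.rpow_le_rpow hx0 (mem_Ioi.1 ht).le hr0.le) (hfpos t).le
      have h3 : (∫ t in Ioi x, t ^ r * f t) ≤ C := by
        apply setIntegral_mono_set (hmom.mono_set (Ioi_subset_Ioi ha0.le))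
        · refine (ae_restrict_iff' measurableSet_Ioi).2 (Eventually.of_forall ?_)
          intro t ht
          exact mul_nonneg (Real.rpow_nonneg (by linarith [mem_Ioi.1 ht]) _) (hfpos t).le
        · exact HasSubset.Subset.eventuallyLE (Ioi_subset_Ioi hx)
      linarith
    set M : ℝ := C * (2 * b) ^ (1/b) with hM_def
    have hclaim : ∀ x, max a (a + e / b) ≤ x → x ^ (r - 1/b) * K ≤ M := by
      intro x hx
      have hxa : a ≤ x := le_trans (le_max_left _ _) hx
      have hxe : a + e / b ≤ x := le_trans (le_max_right _ _) hx
      have hx0 : (0:ℝ) < x := lt_of_lt_of_le ha0 hxa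
      have hbe : e ≤ b * (x - a) := by
        have h := mul_le_mul_of_nonneg_left (by linarith : e / b ≤ x - a) hb0.le
        rwa [mul_div_cancel₀ e hb0.ne'] at h
      have hL2 : L x ≤ 2 * b * x := by
        have h1 : L x ≤ 2 * (b * (x - a)) := by simp only [hL]; linarith
        nlinarith [mul_nonneg hb0.le ha0.le]
      have hPle : (L x) ^ (1/b) ≤ (2 * b) ^ (1/b) * x ^ (1/b) := by
        rw [← Real.mul_rpow (by positivity) hx0.le]
        exact Real.rpow_le_rpow (hLpos x hxa).le hL2 (by positivity)
      have hP0 : (0:ℝ) < (L x) ^ (1/b) := Real.rpow_pos_of_pos (hLpos x hxa) _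
      have hxr : (0:ℝ) ≤ x ^ r := Real.rpow_nonneg hx0.le _
      -- K ≤ φ x = Fbar x * L x ^ (1/b)
      have h1 : x ^ r * K ≤ x ^ r * (Fbar x * (L x) ^ (1/b)) :=
        mul_le_mul_of_nonneg_left (hφge x hxa) hxr
      have h2 : x ^ r * (Fbar x * (L x) ^ (1/b)) ≤ C * (L x) ^ (1/b) := by
        have := htail x hxa
        nlinarith
      have h3 : C * (L x) ^ (1/b) ≤ M * x ^ (1/b) := by
        calc C * (L x) ^ (1/b) ≤ C * ((2 * b) ^ (1/b) * x ^ (1/b)) :=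
              mul_le_mul_of_nonneg_left hPle hC0
          _ = M * x ^ (1/b) := by rw [hM_def]; ring
      have hsplit : x ^ r = x ^ (r - 1/b) * x ^ (1/b) := by
        rw [← Real.rpow_add hx0]
        norm_num
      have hx1b : (0:ℝ) < x ^ (1/b) := Real.rpow_pos_of_pos hx0 _
      have h4 : x ^ (r - 1/b) * K * x ^ (1/b) ≤ M * x ^ (1/b) := by
        calc x ^ (r - 1/b) * K * x ^ (1/b) = x ^ r * K := by rw [hsplit]; ring
          _ ≤ M * x ^ (1/b) := le_trans h1 (le_trans h2 h3)
      exact le_of_mul_le_mul_right h4 hx1b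
    have htend : Tendsto (fun x : ℝ => x ^ (r - 1/b)) atTop atTop :=
      tendsto_rpow_atTop (by linarith)
    obtain ⟨x, hx1, hx2⟩ :=
      ((htend.eventually_gt_atTop (M / K)).and
        (eventually_ge_atTop (max a (a + e / b)))).exists
    have := hclaim x hx2
    rw [div_lt_iff₀ hK] at hx1
    linarith
end

section
/- If E[X^r] < ∞ for some r > 2 and limsup_{x→∞} F̄(x)^{1+γ}/f(x) < ∞ for some γ with 1/r < γ < 1/2, then sup_x e(x) F̄(x)^γ < ∞, where e is the mean residual life function. -/
/-!
Wherever `F̄^{1+γ} ≤ M f`, we have `F̄ ≤ M f F̄^{-γ} = -(M / (1 - γ)) (F̄^{1-γ})'`, so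
integrating over `(x, ∞)` gives `∫_x^∞ F̄ ≤ M / (1 - γ) · F̄(x)^{1-γ}`, i.e.
`e(x) F̄(x)^γ ≤ M / (1 - γ)` for large `x`. On the remaining compact interval `F̄` is bounded
away from zero and `∫_x^∞ F̄ ≤ ∫_0^∞ F̄`.
-/

open MeasureTheory Set Filter

theorem integrableOn_Ioi_and_setIntegral_le_of_intervalIntegral_le {F : ℝ → ℝ} {x C : ℝ}
    (hcont : ContinuousOn F (Ici x)) (hF : ∀ t ≥ x, 0 ≤ F t)
    (hbound : ∀ T ≥ x, ∫ t in x..T, F t ≤ C) :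
    IntegrableOn F (Ioi x) ∧ ∫ t in Ioi x, F t ≤ C := by
  have hbound' : ∀ᶠ T in atTop, ∫ t in x..T, ‖F t‖ ≤ C := by
    filter_upwards [eventually_ge_atTop x] with T hT
    rw [intervalIntegral.integral_congr fun t ht => Real.norm_of_nonneg
      (hF t (by rw [uIcc_of_le hT] at ht; exact ht.1))]
    exact hbound T hT
  have hint : IntegrableOn F (Ioi x) :=
    integrableOn_Ioi_of_intervalIntegral_norm_bounded C x
      (fun T => ((hcont.mono Icc_subset_Ici_self).integrableOn_Icc).mono_set Ioc_subset_Icc_self)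
      tendsto_id hbound'
  exact ⟨hint, le_of_tendsto (intervalIntegral_tendsto_integral_Ioi x hint tendsto_id)
    ((eventually_ge_atTop x).mono hbound)⟩

theorem setIntegral_Ioi_pos_of_pos {f : ℝ → ℝ} {x : ℝ} (hf : ∀ t, 0 < f t)
    (hint : IntegrableOn f (Ioi x)) : 0 < ∫ t in Ioi x, f t := by
  rw [setIntegral_pos_iff_support_of_nonneg_ae (ae_of_all _ fun t => (hf t).le) hint,
    Function.support_eq_univ fun t => (hf t).ne', univ_inter, Real.volume_Ioi]
  exact ENNReal.zero_lt_top

section TailIntegral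

variable {F f : ℝ → ℝ} {a γ M : ℝ}

theorem intervalIntegral_le_of_rpow_le_mul_deriv (hγ : γ < 1) (hM : 0 ≤ M)
    (hd : ∀ x ≥ a, HasDerivAt F (-f x) x) (hpos : ∀ x ≥ a, 0 < F x)
    (htail : ∀ x ≥ a, F x ^ (1 + γ) ≤ M * f x) {x T : ℝ} (hx : a ≤ x) (hxT : x ≤ T) :
    ∫ t in x..T, F t ≤ M / (1 - γ) * F x ^ (1 - γ) := by
  have hcont : ContinuousOn F (Icc x T) := fun t ht =>
    (hd t (hx.trans ht.1)).continuousAt.continuousWithinAt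
  -- `F ≤ M f F^{-γ}`, the derivative of `-(M / (1 - γ)) F^{1-γ}`
  have hle := intervalIntegral.integral_le_sub_of_hasDeriv_right_of_le
    (g := fun t => -(M / (1 - γ)) * F t ^ (1 - γ)) (g' := fun t => M * f t * F t ^ (-γ)) hxT
    (continuousOn_const.mul (hcont.rpow_const fun t ht => Or.inl (hpos t (hx.trans ht.1)).ne'))
    (fun t ht => by
      have h := ((hd t (hx.trans ht.1.le)).rpow_const (p := 1 - γ)
        (Or.inl (hpos t (hx.trans ht.1.le)).ne')).const_mul (-(M / (1 - γ)))
      refine (h.congr_deriv ?_).hasDerivWithinAt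
      rw [sub_sub_cancel_left]
      field_simp [(sub_pos.2 hγ).ne'])
    hcont.integrableOn_Icc
    (fun t ht => by
      have hFt := hpos t (hx.trans ht.1.le)
      calc F t = F t ^ (1 + γ) * F t ^ (-γ) := by
            rw [← Real.rpow_add hFt]; norm_num
        _ ≤ M * f t * F t ^ (-γ) := by gcongr; exact htail t (hx.trans ht.1.le))
  have hT : 0 ≤ M / (1 - γ) * F T ^ (1 - γ) := by
    have := hpos T (hx.trans hxT)
    have := sub_pos.2 hγ
    positivity
  linarith

theorem setIntegral_Ioi_le_of_rpow_le_mul_deriv (hγ : γ < 1) (hM : 0 ≤ M)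
    (hd : ∀ x ≥ a, HasDerivAt F (-f x) x) (hpos : ∀ x ≥ a, 0 < F x)
    (htail : ∀ x ≥ a, F x ^ (1 + γ) ≤ M * f x) {x : ℝ} (hx : a ≤ x) :
    IntegrableOn F (Ioi x) ∧ ∫ t in Ioi x, F t ≤ M / (1 - γ) * F x ^ (1 - γ) :=
  integrableOn_Ioi_and_setIntegral_le_of_intervalIntegral_le
    (fun t ht => (hd t (hx.trans ht)).continuousAt.continuousWithinAt)
    (fun t ht => (hpos t (hx.trans ht)).le)
    (fun _ hT => intervalIntegral_le_of_rpow_le_mul_deriv hγ hM hd hpos htail hx hT)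

theorem exists_forall_setIntegral_Ioi_div_mul_rpow_le (ha : 0 ≤ a) (hγ : γ < 1)
    (hd : ∀ x, HasDerivAt F (-f x) x) (hf : ∀ x, 0 ≤ f x) (hpos : ∀ x ≥ 0, 0 < F x)
    (htail : ∀ x ≥ a, F x ^ (1 + γ) ≤ M * f x) :
    ∃ C, ∀ x ≥ 0, (∫ t in Ioi x, F t) / F x * F x ^ γ ≤ C := by
  have hFa := hpos a ha
  have hM : 0 ≤ M := (pos_of_mul_pos_left ((Real.rpow_pos_of_pos hFa _).trans_le (htail a le_rfl))
    (hf a)).le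
  have hbig := fun x (hx : a ≤ x) =>
    setIntegral_Ioi_le_of_rpow_le_mul_deriv hγ hM (fun x _ => hd x)
      (fun x hx => hpos x (ha.trans hx)) htail hx
  have hFcont : Continuous F := continuous_iff_continuousAt.2 fun x => (hd x).continuousAt
  have hint : IntegrableOn F (Ioi 0) := by
    rw [← Ioc_union_Ioi_eq_Ioi ha]
    exact (hFcont.integrableOn_Icc.mono_set Ioc_subset_Icc_self).union (hbig a le_rfl).1
  have hanti : Antitone F := antitone_of_hasDerivAt_nonpos hd fun x => neg_nonpos.2 (hf x)
  refine ⟨max (M / (1 - γ)) ((∫ t in Ioi 0, F t) * F a ^ (γ - 1)), fun x hx => ?_⟩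
  have hFx := hpos x hx
  rw [div_mul_eq_mul_div, mul_div_assoc, ← Real.rpow_sub_one hFx.ne']
  rcases le_total a x with hax | hxa
  · calc (∫ t in Ioi x, F t) * F x ^ (γ - 1)
        ≤ M / (1 - γ) * F x ^ (1 - γ) * F x ^ (γ - 1) := by gcongr; exact (hbig x hax).2
      _ = M / (1 - γ) := by rw [mul_assoc, ← Real.rpow_add hFx]; norm_num
      _ ≤ _ := le_max_left _ _
  · refine le_trans ?_ (le_max_right _ _)
    have hnonneg : ∀ t ∈ Ioi (0 : ℝ), 0 ≤ F t := fun t ht => (hpos t ht.le).le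
    refine mul_le_mul ?_ ?_ (by positivity) (setIntegral_nonneg measurableSet_Ioi hnonneg)
    · exact setIntegral_mono_set hint ((ae_restrict_mem measurableSet_Ioi).mono hnonneg)
        (Ioi_subset_Ioi hx).eventuallyLE
    · exact Real.rpow_le_rpow_of_nonpos hFa (hanti hxa) (by linarith)

end TailIntegral

theorem stmt14_general (f : ℝ → ℝ) (hfpos : ∀ x, 0 < f x) (hfc : Continuous f)
    (hfint : IntegrableOn f (Ioi 0))
    (Fbar : ℝ → ℝ) (hFbar : ∀ x, 0 ≤ x → Fbar x = ∫ t in Ioi x, f t)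
    (γ : ℝ) (hγ2 : γ < 1 / 2)
    (hlimsup : ∃ M x₀ : ℝ, ∀ x ≥ x₀, Fbar x ^ (1 + γ) / f x ≤ M)
    (e : ℝ → ℝ) (he : ∀ x, e x = (∫ t in Ioi x, Fbar t) / Fbar x) :
    ∃ C : ℝ, ∀ x ≥ (0 : ℝ), e x * Fbar x ^ γ ≤ C := by
  obtain ⟨M, x₀, hM⟩ := hlimsup
  -- a version of `Fbar` that is differentiable on all of `ℝ`
  set F : ℝ → ℝ := fun x => Fbar 0 - ∫ t in 0..x, f t
  have hFbarF : ∀ x ≥ 0, Fbar x = F x := fun x hx => by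
    simp only [F, hFbar x hx, hFbar 0 le_rfl, ← intervalIntegral.integral_Ioi_sub_Ioi hfint hx]
    ring
  have hd : ∀ x, HasDerivAt F (-f x) x := fun x => by
    simpa using (hfc.integral_hasStrictDerivAt 0 x).hasDerivAt.const_sub (Fbar 0)
  have hpos : ∀ x ≥ 0, 0 < F x := fun x hx => by
    rw [← hFbarF x hx, hFbar x hx]
    exact setIntegral_Ioi_pos_of_pos hfpos (hfint.mono_set (Ioi_subset_Ioi hx))
  have htail : ∀ x ≥ max x₀ 0, F x ^ (1 + γ) ≤ M * f x := fun x hx => by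
    rw [← hFbarF x (le_of_max_le_right hx), ← div_le_iff₀ (hfpos x)]
    exact hM x (le_of_max_le_left hx)
  obtain ⟨C, hC⟩ := exists_forall_setIntegral_Ioi_div_mul_rpow_le (le_max_right x₀ 0)
    (by linarith) hd (fun x => (hfpos x).le) hpos htail
  refine ⟨C, fun x hx => ?_⟩
  rw [he, setIntegral_congr_fun measurableSet_Ioi fun t ht => hFbarF t (hx.trans ht.le),
    hFbarF x hx]
  exact hC x hx

/-- If `E[Xʳ] < ∞` for some `r > 2` and `limsup F̄(x)^{1+γ}/f(x) < ∞` for some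
`γ ∈ (1/r, 1/2)`, then `sup_x e(x) F̄(x)^γ < ∞`. -/
theorem stmt14 (f : ℝ → ℝ) (hfpos : ∀ x, 0 < f x) (hfc : Continuous f)
    (hfint : IntegrableOn f (Ioi 0))
    (Fbar : ℝ → ℝ) (hFbar : ∀ x, 0 ≤ x → Fbar x = ∫ t in Ioi x, f t)
    (hF0 : Fbar 0 = 1)
    (r γ : ℝ) (hr : 2 < r) (hγ1 : 1 / r < γ) (hγ2 : γ < 1 / 2)
    (hmom : IntegrableOn (fun t => t ^ r * f t) (Ioi 0))
    (hlimsup : ∃ M x₀ : ℝ, ∀ x ≥ x₀, Fbar x ^ (1 + γ) / f x ≤ M)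
    (e : ℝ → ℝ) (he : ∀ x, e x = (∫ t in Ioi x, Fbar t) / Fbar x) :
    ∃ C : ℝ, ∀ x ≥ (0 : ℝ), e x * Fbar x ^ γ ≤ C :=
  stmt14_general f hfpos hfc hfint Fbar hFbar γ hγ2 hlimsup e he
end
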